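/- For any sequence of finite point sets X_n ⊂ ℝ² with |X_n| = n (each containing at least two distinct points), the ratio ρ(X_n) = P_n(M_n)/P_n(s_n*) tends to 1 as n → ∞, where M_n is the centroid of X_n, P_n the quadratic min-power objective on X_n, and s_n* its minimiser. In particular 1 ≤ ρ(X_n) ≤ (1/2)((n+1)/n)² + 1/2. -/

import Mathlib

/-!
By the parallel-axis identity `∑ ‖t - xᵢ‖² = ∑ ‖M - xᵢ‖² + n ‖t - M‖²`, moving any point `t` to
the centroid `M` lowers the sum term by exactly `n ‖t - M‖²`, while the triangle inequality and
Young's inequality raise the maximum term by at most `n ‖t - M‖² + maxᵢ ‖t - xᵢ‖² / (n - 1)`.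
The maximum term is at most half of `P t`, so `P M ≤ (1 + 1 / (2 (n - 1))) P t`; for `t = s*`
this is below the stated bound, which tends to `1`.
-/

theorem tendsto_half_mul_add_one_div_sq_add_half :
    Filter.Tendsto (fun n : ℕ => 1 / 2 * (((n : ℝ) + 1) / n) ^ 2 + 1 / 2) Filter.atTop
      (nhds 1) := by
  have h : Filter.Tendsto (fun n : ℕ => ((n : ℝ) + 1) / n) Filter.atTop (nhds 1) := by
    simpa [add_comm] using tendsto_add_mul_div_add_mul_atTop_nhds (1 : ℝ) 0 1 one_ne_zero
  convert ((h.pow 2).const_mul (1 / 2)).add_const (1 / 2) using 2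
  norm_num

namespace MinPower

section Centroid

variable {ι E : Type*} [Fintype ι] [AddCommGroup E] [Module ℝ E]

noncomputable def centroid (x : ι → E) : E := (Fintype.card ι : ℝ)⁻¹ • ∑ i, x i

theorem sum_centroid_sub [Nonempty ι] (x : ι → E) : ∑ i, (centroid x - x i) = 0 := by
  rw [Finset.sum_sub_distrib, Finset.sum_const, Finset.card_univ, ← Nat.cast_smul_eq_nsmul ℝ,
    centroid, smul_smul, mul_inv_cancel₀ (Nat.cast_ne_zero.2 Fintype.card_ne_zero), one_smul,
    sub_self]

end Centroid

variable {ι E : Type*} [Fintype ι] [NormedAddCommGroup E]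

def sumSqDist (x : ι → E) (t : E) : ℝ := ∑ i, ‖t - x i‖ ^ 2

variable [Nonempty ι]

def maxSqDist (x : ι → E) (t : E) : ℝ :=
  Finset.univ.sup' Finset.univ_nonempty fun i => ‖t - x i‖ ^ 2

def minPower (x : ι → E) (t : E) : ℝ := sumSqDist x t + maxSqDist x t

theorem sq_norm_sub_le_maxSqDist (x : ι → E) (t : E) (i : ι) :
    ‖t - x i‖ ^ 2 ≤ maxSqDist x t :=
  Finset.le_sup' (fun i => ‖t - x i‖ ^ 2) (Finset.mem_univ i)

theorem maxSqDist_le_sumSqDist (x : ι → E) (t : E) : maxSqDist x t ≤ sumSqDist x t :=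
  Finset.sup'_le _ _ fun i _ => Finset.single_le_sum (f := fun i => ‖t - x i‖ ^ 2)
    (fun _ _ => sq_nonneg _) (Finset.mem_univ i)

theorem maxSqDist_nonneg (x : ι → E) (t : E) : 0 ≤ maxSqDist x t :=
  (sq_nonneg _).trans (sq_norm_sub_le_maxSqDist x t (Classical.arbitrary ι))

theorem mul_maxSqDist_le (x : ι → E) (t u : E) {c : ℝ} (hc : 0 ≤ c) :
    c * maxSqDist x u ≤ c * (1 + c) * ‖u - t‖ ^ 2 + (1 + c) * maxSqDist x t := by
  obtain ⟨i, -, hi⟩ := Finset.exists_mem_eq_sup' Finset.univ_nonempty fun i => ‖u - x i‖ ^ 2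
  have htri : ‖u - x i‖ ≤ ‖u - t‖ + ‖t - x i‖ := norm_sub_le_norm_sub_add_norm_sub _ _ _
  have hmax := sq_norm_sub_le_maxSqDist x t i
  -- Young's inequality `2ab ≤ c a² + b² / c`, cleared of denominators
  have young : c * (‖u - t‖ + ‖t - x i‖) ^ 2 ≤
      c * (1 + c) * ‖u - t‖ ^ 2 + (1 + c) * ‖t - x i‖ ^ 2 := by
    nlinarith [sq_nonneg (c * ‖u - t‖ - ‖t - x i‖)]
  rw [maxSqDist, hi]
  calc c * ‖u - x i‖ ^ 2 ≤ c * (‖u - t‖ + ‖t - x i‖) ^ 2 := by gcongr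
    _ ≤ _ := young
    _ ≤ _ := by gcongr

theorem minPower_pos {x : ι → E} {i j : ι} (hij : x i ≠ x j) (t : E) : 0 < minPower x t := by
  have hsum : 0 < sumSqDist x t := by
    obtain ⟨k, hk⟩ : ∃ k, t ≠ x k := by
      by_cases h : t = x i
      · exact ⟨j, h ▸ hij⟩
      · exact ⟨i, h⟩
    exact Finset.sum_pos' (fun _ _ => sq_nonneg _)
      ⟨k, Finset.mem_univ k, pow_pos (norm_pos_iff.2 (sub_ne_zero.2 hk)) 2⟩
  exact add_pos_of_pos_of_nonneg hsum (maxSqDist_nonneg x t)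

variable [InnerProductSpace ℝ E]

theorem sumSqDist_eq_sumSqDist_centroid_add (x : ι → E) (t : E) :
    sumSqDist x t = sumSqDist x (centroid x) + Fintype.card ι * ‖t - centroid x‖ ^ 2 := by
  have expand (i : ι) : ‖t - x i‖ ^ 2 = ‖t - centroid x‖ ^ 2
      + 2 * inner ℝ (t - centroid x) (centroid x - x i) + ‖centroid x - x i‖ ^ 2 := by
    rw [← norm_add_sq_real, sub_add_sub_cancel]
  simp only [sumSqDist, expand, Finset.sum_add_distrib, Finset.sum_const, Finset.card_univ,
    nsmul_eq_mul, ← Finset.mul_sum, ← inner_sum, sum_centroid_sub, inner_zero_right]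
  ring

theorem card_sub_one_mul_minPower_centroid_le (x : ι → E) (t : E) :
    (Fintype.card ι - 1) * minPower x (centroid x) ≤
      (Fintype.card ι - 1) * minPower x t + maxSqDist x t := by
  have hn : (1 : ℝ) ≤ Fintype.card ι := Nat.one_le_cast.2 Fintype.card_pos
  have hmax := mul_maxSqDist_le x t (centroid x) (sub_nonneg.2 hn)
  rw [norm_sub_rev] at hmax
  -- the `‖t - centroid x‖²` terms from the two estimates cancel exactly
  rw [minPower, minPower, sumSqDist_eq_sumSqDist_centroid_add x t]
  linarith

theorem minPower_centroid_div_le {x : ι → E} (hcard : 2 ≤ Fintype.card ι) {t : E}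
    (ht : 0 < minPower x t) :
    minPower x (centroid x) / minPower x t ≤
      1 / 2 * (((Fintype.card ι : ℝ) + 1) / Fintype.card ι) ^ 2 + 1 / 2 := by
  have hn : (2 : ℝ) ≤ Fintype.card ι := by exact_mod_cast hcard
  set n : ℝ := (Fintype.card ι : ℝ)
  set B := 1 / 2 * ((n + 1) / n) ^ 2 + 1 / 2
  have hmax : 2 * maxSqDist x t ≤ minPower x t := by
    rw [two_mul, minPower]; gcongr; exact maxSqDist_le_sumSqDist x t
  have hB : 2 * n - 1 ≤ 2 * (n - 1) * B := by
    have : 2 * (n - 1) * B - (2 * n - 1) = (n ^ 2 - n - 1) / n ^ 2 := by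
      simp only [B]; field_simp; ring
    rw [← sub_nonneg, this]
    exact div_nonneg (by nlinarith) (sq_nonneg n)
  have key : 2 * (n - 1) * minPower x (centroid x) ≤ 2 * (n - 1) * (B * minPower x t) := by
    nlinarith [card_sub_one_mul_minPower_centroid_le x t]
  rw [div_le_iff₀ ht]
  exact le_of_mul_le_mul_left key (by linarith)

end MinPower

open MinPower in
/-- For any sequence of point sets `X_n` of `n` points (each with at least two distinct
points), the ratio `ρ(X_n) = P_n(M_n)/P_n(s_n*)` tends to 1 as `n → ∞`, and satisfies
`1 ≤ ρ(X_n) ≤ (1/2)((n+1)/n)² + 1/2`. -/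
theorem centroid_ratio_tendsto_one
    (x : (n : ℕ) → Fin n → EuclideanSpace ℝ (Fin 2))
    (P : (n : ℕ) → EuclideanSpace ℝ (Fin 2) → ℝ)
    (hP : ∀ (n : ℕ) (hn : 0 < n) (s : EuclideanSpace ℝ (Fin 2)),
      P n s = (∑ i, ‖s - x n i‖ ^ 2) +
        Finset.univ.sup'
          (Finset.univ_nonempty_iff.mpr (Fin.pos_iff_nonempty.mp hn))
          (fun i => ‖s - x n i‖ ^ 2))
    (M : ℕ → EuclideanSpace ℝ (Fin 2)) (hM : ∀ n, M n = (n : ℝ)⁻¹ • ∑ i, x n i)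
    (s : ℕ → EuclideanSpace ℝ (Fin 2)) (hs : ∀ n, 2 ≤ n → ∀ t, P n (s n) ≤ P n t)
    (hdist : ∀ n, 2 ≤ n → ∃ i j, x n i ≠ x n j)
    (ρ : ℕ → ℝ) (hρ : ∀ n, ρ n = P n (M n) / P n (s n)) :
    Filter.Tendsto ρ Filter.atTop (nhds 1) ∧
    ∀ n, 2 ≤ n → 1 ≤ ρ n ∧
      ρ n ≤ (1 / 2) * (((n : ℝ) + 1) / n) ^ 2 + 1 / 2 := by
  have bounds (n : ℕ) (hn : 2 ≤ n) :
      1 ≤ ρ n ∧ ρ n ≤ (1 / 2) * (((n : ℝ) + 1) / n) ^ 2 + 1 / 2 := by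
    have : NeZero n := ⟨by omega⟩
    have hPn (t) : P n t = minPower (x n) t := hP n (by omega) t
    have hMn : M n = centroid (x n) := by rw [hM, centroid, Fintype.card_fin]
    obtain ⟨i, j, hij⟩ := hdist n hn
    have hpos := minPower_pos hij (s n)
    rw [hρ, hMn, hPn, hPn]
    refine ⟨(one_le_div hpos).2 ?_, ?_⟩
    · simpa only [hPn] using hs n hn (centroid (x n))
    · simpa only [Fintype.card_fin] using minPower_centroid_div_le (by simpa using hn) hpos
  refine ⟨tendsto_of_tendsto_of_tendsto_of_le_of_le' tendsto_const_nhds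
    tendsto_half_mul_add_one_div_sq_add_half ?_ ?_, bounds⟩
  · filter_upwards [Filter.eventually_ge_atTop 2] with n hn using (bounds n hn).1
  · filter_upwards [Filter.eventually_ge_atTop 2] with n hn using (bounds n hn).2
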